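/- Under the assumptions of the grounded-equilibrium iteration (ACC, app monotone; mng monotone in first argument and inflationary; all over subsets of a finite set F), the limit kb^∞ = ⋃_n kb_n satisfies: S = ACC(kb^∞) is a fixpoint of the one-step update, i.e., mng (app S) kb^∞ = kb^∞. -/
import Mathlib


theorem grounded_iteration_limit_fixpoint {F O B : Type*} [Finite F] [PartialOrder B]
    (ACC : Set F → B) (hACC : Monotone ACC)
    (app : B → Set O) (happ : Monotone app)
    (mng : Set O → Set F → Set F)
    (hmng : ∀ kb, Monotone fun ops => mng ops kb)
    (hinfl : ∀ ops kb, kb ⊆ mng ops kb)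
    (kb : Set F) (kbs : ℕ → Set F)
    (h0 : kbs 0 = kb)
    (hsucc : ∀ n, kbs (n + 1) = mng (app (ACC (kbs n))) (kbs n)) :
    mng (app (ACC (⋃ n, kbs n))) (⋃ n, kbs n) = ⋃ n, kbs n := by
  have hmono : Monotone kbs :=
    monotone_nat_of_le_succ fun n => by rw [hsucc]; exact hinfl _ _
  -- kbs is not injective since Set F is finite
  obtain ⟨a, b, hne, heq⟩ := Finite.exists_ne_map_eq_of_infinite kbs
  -- wlog a < b
  obtain ⟨a, b, hlt, heq⟩ : ∃ a b, a < b ∧ kbs a = kbs b := by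
    rcases hne.lt_or_gt with h | h
    · exact ⟨a, b, h, heq⟩
    · exact ⟨b, a, h, heq.symm⟩
  have hfix : kbs (a + 1) = kbs a :=
    le_antisymm (heq ▸ hmono hlt) (hmono (Nat.le_succ a))
  have hstab : ∀ m, a ≤ m → kbs m = kbs a := by
    intro m hm
    induction m with
    | zero => rw [Nat.le_zero.mp hm]
    | succ k ih =>
      rcases Nat.lt_or_ge a (k + 1) with h | h
      · have hk : a ≤ k := Nat.lt_succ_iff.mp h
        have := ih hk
        rw [hsucc, this, ← hsucc, hfix]
      · rw [Nat.le_antisymm h hm]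
  have hun : (⋃ n, kbs n) = kbs a := by
    apply le_antisymm
    · exact Set.iUnion_subset fun n => by
        rcases Nat.le_total n a with h | h
        · exact hmono h
        · exact (hstab n h).le
    · exact Set.subset_iUnion kbs a
  rw [hun, ← hsucc, hfix]
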